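/- arXiv:0707.3794 — 2 statements merged into one kernel-verified Lean document; each statement's English description precedes it below -/
import Mathlib

section
/- Let G = (V,E) be a finite bi-directed (simple) graph and let p be a binary distribution on V taking values in I = {0,1}^V. Then p satisfies the connected set Markov property for G if and only if for every disconnected set D ⊆ V, with unique partition D = C_1 ∪̇ ⋯ ∪̇ C_r into inclusion-maximal connected subsets, one has P(X_D = i_D) = P(X_{C_1} = i_{C_1})·P(X_{C_2} = i_{C_2})⋯P(X_{C_r} = i_{C_r}) for all i ∈ I. -/
/-!
If `C` is a component of `D`, then no vertex of `D \ C` is adjacent to `C`, so `D \ C ⊆ V \ spo C`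
and the connected set Markov property for `C`, marginalised to `D \ C`, splits `P(X_D = i_D)` into
`P(X_C = i_C) · P(X_{D \ C} = i_{D \ C})`. The components of `D \ C` are the other components of
`D`, so induction on `D` gives the product formula. Conversely, a connected `C` is a component of
`C ∪ (V \ spo C)` whose other components are those of `V \ spo C`; the product formulas for these
two sets give `P(X_{C ∪ T}) = P(X_C) · P(X_T)` for `T = V \ spo C`, which is the independence.
-/

open Finset

namespace BMMI

variable {V : Type*} [Fintype V] [DecidableEq V]

/-- `Pr p A a` is the probability of the event `X_A = a|_A` under `p`. -/
def Pr (p : (V → Bool) → ℝ) (A : Finset V) (a : V → Bool) : ℝ :=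
  ∑ i ∈ Finset.univ.filter (fun i : V → Bool => ∀ v ∈ A, i v = a v), p i

/-- `p` is a binary distribution on `V`. -/
def IsDist (p : (V → Bool) → ℝ) : Prop :=
  (∀ i, 0 ≤ p i) ∧ ∑ i : V → Bool, p i = 1

/-- `Pr2 p S T a b` is the probability of the joint event `X_S = a|_S, X_T = b|_T`. -/
def Pr2 (p : (V → Bool) → ℝ) (S T : Finset V) (a b : V → Bool) : ℝ :=
  ∑ i ∈ Finset.univ.filter
      (fun i : V → Bool => (∀ v ∈ S, i v = a v) ∧ (∀ v ∈ T, i v = b v)), p i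

/-- `X_S` and `X_T` are independent under `p`. -/
def Indep (p : (V → Bool) → ℝ) (S T : Finset V) : Prop :=
  ∀ a b : V → Bool, Pr2 p S T a b = Pr p S a * Pr p T b

/-- `spo G A` consists of `A` together with all vertices adjacent to a vertex of `A`. -/
def spo (G : SimpleGraph V) [DecidableRel G.Adj] (A : Finset V) : Finset V :=
  Finset.univ.filter (fun w => w ∈ A ∨ ∃ v ∈ A, G.Adj v w)

/-- `C` is connected in `G`: every pair of vertices of `C` is joined by a walk
all of whose vertices lie in `C`. -/
def Conn (G : SimpleGraph V) (C : Finset V) : Prop :=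
  ∀ v ∈ C, ∀ w ∈ C, ∃ W : G.Walk v w, ∀ x ∈ W.support, x ∈ C

/-- The connected set Markov property for the bi-directed graph `G`. -/
def CSMP (G : SimpleGraph V) [DecidableRel G.Adj] (p : (V → Bool) → ℝ) : Prop :=
  ∀ C : Finset V, C.Nonempty → Conn G C → Indep p C (Finset.univ \ spo G C)

/-- `C` is an inclusion-maximal connected subset of `D` (a connected component of the
induced subgraph on `D`). -/
def IsMaxConnComp (G : SimpleGraph V) (D C : Finset V) : Prop :=
  C ⊆ D ∧ C.Nonempty ∧ Conn G C ∧
    ∀ C' : Finset V, C ⊆ C' → C' ⊆ D → Conn G C' → C' = C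

/-- The Möbius parameter `q_A(p) = P(X_A = 0)`. -/
def qM (p : (V → Bool) → ℝ) (A : Finset V) : ℝ := Pr p A (fun _ => false)

end BMMI

-- Reopened without the section variables `[Fintype V] [DecidableEq V]`, which most lemmas below
-- do not need.
namespace BMMI

section Graph

variable {V : Type*} {G : SimpleGraph V}

theorem conn_iff_preconnected_induce (C : Finset V) :
    Conn G C ↔ (G.induce (C : Set V)).Preconnected := by
  constructor
  · rintro h ⟨v, hv⟩ ⟨w, hw⟩
    obtain ⟨W, hW⟩ := h v hv w hw
    exact ⟨W.induce _ hW⟩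
  · intro h v hv w hw
    obtain ⟨W⟩ := h ⟨v, hv⟩ ⟨w, hw⟩
    refine ⟨W.map (SimpleGraph.Embedding.induce _).toHom, fun x hx => ?_⟩
    obtain ⟨y, -, rfl⟩ := List.mem_map.1 ((W.support_map _) ▸ hx)
    exact y.2

theorem conn_singleton (v : V) : Conn G {v} := by
  intro u hu w hw
  rw [mem_singleton] at hu hw
  subst hu hw
  exact ⟨.nil, by simp⟩

theorem Conn.union [DecidableEq V] {C₁ C₂ : Finset V} {x : V} (h₁ : Conn G C₁) (h₂ : Conn G C₂)
    (hx₁ : x ∈ C₁) (hx₂ : x ∈ C₂) : Conn G (C₁ ∪ C₂) := by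
  rw [conn_iff_preconnected_induce] at *
  rw [coe_union]
  exact (SimpleGraph.induce_union_connected h₁ h₂ ⟨x, hx₁, hx₂⟩).preconnected

theorem conn_pair [DecidableEq V] {u v : V} (h : G.Adj u v) : Conn G {u, v} := by
  rw [conn_iff_preconnected_induce, coe_pair]
  exact (SimpleGraph.induce_pair_connected_of_adj h).preconnected

namespace IsMaxConnComp

theorem subset_of_conn [DecidableEq V] {D C C' : Finset V} (hC : IsMaxConnComp G D C)
    (hC' : Conn G C') (hC'D : C' ⊆ D) {x : V} (hxC : x ∈ C) (hxC' : x ∈ C') : C' ⊆ C := by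
  have heq := hC.2.2.2 _ subset_union_left (union_subset hC.1 hC'D) (hC.2.2.1.union hC' hxC hxC')
  exact heq ▸ subset_union_right

theorem eq_of_mem [DecidableEq V] {D C₁ C₂ : Finset V} (h₁ : IsMaxConnComp G D C₁)
    (h₂ : IsMaxConnComp G D C₂) {x : V} (hx₁ : x ∈ C₁) (hx₂ : x ∈ C₂) : C₁ = C₂ :=
  (h₂.subset_of_conn h₁.2.2.1 h₁.1 hx₂ hx₁).antisymm (h₁.subset_of_conn h₂.2.2.1 h₂.1 hx₁ hx₂)

theorem not_adj [DecidableEq V] {D C : Finset V} (hC : IsMaxConnComp G D C) {u w : V}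
    (hu : u ∈ C) (hw : w ∈ D \ C) : ¬ G.Adj u w := by
  intro hadj
  rw [mem_sdiff] at hw
  refine hw.2 (hC.subset_of_conn (conn_pair hadj) ?_ hu (by simp) (by simp))
  exact insert_subset (hC.1 hu) (singleton_subset_iff.2 hw.1)

theorem sdiff_iff [DecidableEq V] {D C C' : Finset V} (hC : IsMaxConnComp G D C) :
    IsMaxConnComp G (D \ C) C' ↔ IsMaxConnComp G D C' ∧ C' ≠ C := by
  constructor
  · rintro ⟨hC'D, ⟨y, hy⟩, hconn, hmax⟩
    have hyC : y ∉ C := (mem_sdiff.1 (hC'D hy)).2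
    refine ⟨⟨hC'D.trans sdiff_subset, ⟨y, hy⟩, hconn, fun C'' hC'C'' hC''D hC'' => ?_⟩,
      fun h => hyC (h ▸ hy)⟩
    refine hmax C'' hC'C'' (fun z hz => mem_sdiff.2 ⟨hC''D hz, fun hzC => hyC ?_⟩) hC''
    exact hC.subset_of_conn hC'' hC''D hzC hz (hC'C'' hy)
  · rintro ⟨hC', hne⟩
    have hC'D : C' ⊆ D \ C := fun z hz =>
      mem_sdiff.2 ⟨hC'.1 hz, fun hzC => hne (eq_of_mem hC' hC hz hzC)⟩
    exact ⟨hC'D, hC'.2.1, hC'.2.2.1,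
      fun C'' h₁ h₂ h₃ => hC'.2.2.2 C'' h₁ (h₂.trans sdiff_subset) h₃⟩

end IsMaxConnComp

theorem exists_isMaxConnComp {D : Finset V} (hD : D.Nonempty) : ∃ C, IsMaxConnComp G D C := by
  classical
  obtain ⟨v, hv⟩ := hD
  let conns := D.powerset.filter (Conn G)
  have hv' : {v} ∈ conns := mem_filter.2 ⟨by simpa using hv, conn_singleton v⟩
  obtain ⟨C, hC, hmax⟩ := conns.exists_max_image card ⟨_, hv'⟩
  obtain ⟨hCD, hconn⟩ := mem_filter.1 hC
  refine ⟨C, mem_powerset.1 hCD, nonempty_of_ne_empty ?_, hconn, fun C' hCC' hC'D hC' => ?_⟩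
  · rintro rfl
    simpa using hmax _ hv'
  · exact (eq_of_subset_of_card_le hCC' (hmax C' (mem_filter.2 ⟨mem_powerset.2 hC'D, hC'⟩))).symm

theorem isMaxConnComp_iff_eq_of_conn {D C : Finset V} (hD : Conn G D) (hne : D.Nonempty) :
    IsMaxConnComp G D C ↔ C = D := by
  constructor
  · rintro ⟨hCD, -, -, hmax⟩
    exact (hmax D hCD Subset.rfl hD).symm
  · rintro rfl
    exact ⟨Subset.rfl, hne, hD, fun C' h₁ h₂ _ => h₂.antisymm h₁⟩

theorem isMaxConnComp_union_of_not_adj [DecidableEq V] {C T : Finset V} (hC : Conn G C)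
    (hne : C.Nonempty) (hT : ∀ u ∈ C, ∀ w ∈ T, ¬ G.Adj u w) : IsMaxConnComp G (C ∪ T) C := by
  refine ⟨subset_union_left, hne, hC, fun C' hCC' hC'D hC' => ?_⟩
  refine Subset.antisymm (fun w hw => ?_) hCC'
  by_contra hwC
  obtain ⟨v, hv⟩ := hne
  obtain ⟨W, hW⟩ := hC' v (hCC' hv) w hw
  obtain ⟨d, hd, hd₁, hd₂⟩ := W.exists_boundary_dart (C : Set V) hv hwC
  rcases mem_union.1 (hC'D (hW _ (W.dart_snd_mem_support_of_mem_darts hd))) with h | h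
  · exact hd₂ h
  · exact hT _ hd₁ _ h d.adj

end Graph

section Components

variable {V : Type*} [Fintype V] {G : SimpleGraph V}

open Classical in
noncomputable def components (G : SimpleGraph V) (D : Finset V) : Finset (Finset V) :=
  univ.filter (IsMaxConnComp G D)

theorem mem_components {D C : Finset V} : C ∈ components G D ↔ IsMaxConnComp G D C := by
  simp [components]

theorem eq_components {D : Finset V} {𝒞 : Finset (Finset V)}
    (h𝒞 : ∀ C, C ∈ 𝒞 ↔ IsMaxConnComp G D C) : 𝒞 = components G D := by
  ext C
  rw [h𝒞, mem_components]

theorem components_empty : components G ∅ = ∅ := by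
  refine eq_empty_of_forall_notMem fun C hC => ?_
  obtain ⟨hC, ⟨x, hx⟩, -⟩ := mem_components.1 hC
  exact notMem_empty x (hC hx)

theorem components_eq_singleton {D : Finset V} (hD : Conn G D) (hne : D.Nonempty) :
    components G D = {D} := by
  ext C
  rw [mem_components, isMaxConnComp_iff_eq_of_conn hD hne, mem_singleton]

theorem prod_components_eq_mul [DecidableEq V] {M : Type*} [CommMonoid M] (f : Finset V → M)
    {D C : Finset V} (hC : IsMaxConnComp G D C) :
    ∏ C' ∈ components G D, f C' = f C * ∏ C' ∈ components G (D \ C), f C' := by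
  have hC' : C ∉ components G (D \ C) := fun h => (hC.sdiff_iff.1 (mem_components.1 h)).2 rfl
  have heq : components G D = insert C (components G (D \ C)) := by
    ext C'
    rw [mem_insert, mem_components, mem_components, hC.sdiff_iff]
    by_cases h : C' = C
    · subst h
      simpa using hC
    · simp [h]
  rw [heq, prod_insert hC']

end Components

section Probability

variable {V : Type*} [Fintype V] [DecidableEq V] {p : (V → Bool) → ℝ}

theorem pr_empty (hp : ∑ i, p i = 1) (a : V → Bool) : Pr p ∅ a = 1 := by
  simpa [Pr] using hp

theorem pr_congr {A : Finset V} {a b : V → Bool} (h : ∀ v ∈ A, a v = b v) :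
    Pr p A a = Pr p A b := by
  unfold Pr
  congr 1
  ext i
  simp only [mem_filter, mem_univ, true_and]
  exact forall₂_congr fun v hv => by rw [h v hv]

theorem pr_union_eq_pr2 (S T : Finset V) (a : V → Bool) : Pr p (S ∪ T) a = Pr2 p S T a a := by
  unfold Pr Pr2
  congr 1
  ext i
  simp [or_imp, forall_and]

theorem pr2_eq_pr_union {S T : Finset V} (hST : Disjoint S T) (a b : V → Bool) :
    Pr2 p S T a b = Pr p (S ∪ T) (fun v => if v ∈ S then a v else b v) := by
  unfold Pr Pr2
  congr 1
  ext i
  simp only [mem_filter, mem_univ, true_and, mem_union, or_imp, forall_and]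
  refine and_congr (forall₂_congr fun v hv => by simp [hv])
    (forall₂_congr fun v hv => by simp [disjoint_right.1 hST hv])

theorem indep_iff_pr_union {S T : Finset V} (hST : Disjoint S T) :
    Indep p S T ↔ ∀ i, Pr p (S ∪ T) i = Pr p S i * Pr p T i := by
  constructor
  · intro h i
    rw [pr_union_eq_pr2, h]
  · intro h a b
    rw [pr2_eq_pr_union hST, h]
    congr 1 <;> refine pr_congr fun v hv => ?_
    · simp [hv]
    · simp [disjoint_right.1 hST hv]

theorem pr2_empty_left (T : Finset V) (a b : V → Bool) : Pr2 p ∅ T a b = Pr p T b := by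
  simp [Pr, Pr2]

theorem pr2_eq_pr2_insert_add (S : Finset V) {T : Finset V} {w : V} (hw : w ∉ T)
    (a b : V → Bool) :
    Pr2 p S T a b = Pr2 p S (insert w T) a (Function.update b w true)
      + Pr2 p S (insert w T) a (Function.update b w false) := by
  unfold Pr2
  rw [← sum_union]
  · congr 1
    ext i
    have hT : ∀ c, (∀ v ∈ T, i v = Function.update b w c v) ↔ ∀ v ∈ T, i v = b v :=
      fun c => forall₂_congr fun v hv => by rw [Function.update_of_ne (ne_of_mem_of_not_mem hv hw)]
    simp only [mem_filter, mem_univ, true_and, mem_union, forall_mem_insert, hT,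
      Function.update_self]
    cases i w <;> simp
  · rw [disjoint_filter]
    intro i _ h₁ h₂
    simp only [forall_mem_insert, Function.update_self] at h₁ h₂
    exact Bool.noConfusion (h₁.2.1.symm.trans h₂.2.1)

theorem Indep.of_insert {S T : Finset V} {w : V} (h : Indep p S (insert w T)) (hw : w ∉ T) :
    Indep p S T := by
  intro a b
  have hmarg : Pr p T b = Pr p (insert w T) (Function.update b w true)
      + Pr p (insert w T) (Function.update b w false) := by
    simpa only [pr2_empty_left] using pr2_eq_pr2_insert_add (p := p) ∅ hw b b
  rw [pr2_eq_pr2_insert_add S hw, h, h, hmarg, mul_add]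

theorem Indep.mono {S T T' : Finset V} (h : Indep p S T) (hT' : T' ⊆ T) : Indep p S T' := by
  induction T using Finset.strongInduction with
  | H T ih =>
    obtain rfl | hss := hT'.eq_or_ssubset
    · exact h
    obtain ⟨w, hwT, hwT'⟩ := exists_of_ssubset hss
    have h' : Indep p S (T.erase w) := (insert_erase hwT ▸ h).of_insert (notMem_erase w T)
    exact ih _ (erase_ssubset hwT) h' (subset_erase.2 ⟨hT', hwT'⟩)

end Probability

section MarkovProperty

variable {V : Type*} [Fintype V] [DecidableEq V] {G : SimpleGraph V} {p : (V → Bool) → ℝ}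

theorem pr_eq_prod_components_of_conn (hp : ∑ i, p i = 1) {D : Finset V} (hD : Conn G D)
    (i : V → Bool) : Pr p D i = ∏ C ∈ components G D, Pr p C i := by
  obtain rfl | hne := D.eq_empty_or_nonempty
  · rw [components_empty, prod_empty, pr_empty hp]
  · rw [components_eq_singleton hD hne, prod_singleton]

variable [DecidableRel G.Adj]

theorem mem_spo {A : Finset V} {w : V} : w ∈ spo G A ↔ w ∈ A ∨ ∃ v ∈ A, G.Adj v w := by
  simp [spo]

theorem IsMaxConnComp.sdiff_subset_compl_spo {D C : Finset V} (hC : IsMaxConnComp G D C) :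
    D \ C ⊆ univ \ spo G C := by
  intro w hw
  simp only [mem_sdiff, mem_univ, true_and, mem_spo, not_or, not_exists, not_and]
  exact ⟨(mem_sdiff.1 hw).2, fun u hu => hC.not_adj hu hw⟩

theorem pr_eq_prod_components_of_csmp (hp : ∑ i, p i = 1) (h : CSMP G p) (D : Finset V)
    (i : V → Bool) : Pr p D i = ∏ C ∈ components G D, Pr p C i := by
  induction D using Finset.strongInduction with
  | H D ih =>
    obtain rfl | hne := D.eq_empty_or_nonempty
    · rw [components_empty, prod_empty, pr_empty hp]
    obtain ⟨C, hC⟩ := exists_isMaxConnComp (G := G) hne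
    have hindep : Indep p C (D \ C) := (h C hC.2.1 hC.2.2.1).mono hC.sdiff_subset_compl_spo
    rw [prod_components_eq_mul _ hC, ← ih _ (sdiff_ssubset hC.1 hC.2.1),
      ← (indep_iff_pr_union disjoint_sdiff).1 hindep, union_sdiff_of_subset hC.1]

theorem csmp_of_pr_eq_prod_components
    (h : ∀ (D : Finset V) (i : V → Bool), Pr p D i = ∏ C ∈ components G D, Pr p C i) :
    CSMP G p := by
  intro C hne hC
  have hCT : Disjoint C (univ \ spo G C) :=
    disjoint_left.2 fun v hv hvT => (mem_sdiff.1 hvT).2 (mem_spo.2 (.inl hv))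
  have hadj : ∀ u ∈ C, ∀ w ∈ univ \ spo G C, ¬ G.Adj u w :=
    fun u hu w hw huw => (mem_sdiff.1 hw).2 (mem_spo.2 (.inr ⟨u, hu, huw⟩))
  refine (indep_iff_pr_union hCT).2 fun i => ?_
  rw [h, prod_components_eq_mul _ (isMaxConnComp_union_of_not_adj hC hne hadj),
    union_sdiff_cancel_left hCT, ← h]

end MarkovProperty

variable {V : Type*} [Fintype V] [DecidableEq V]

/-- Lemma 1 (conncheck): a binary distribution satisfies the connected set Markov
property for `G` iff for every disconnected set `D`, with partition into
inclusion-maximal connected subsets `C_1, …, C_r`, one has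
`P(X_D = i_D) = ∏_j P(X_{C_j} = i_{C_j})` for all cells `i`. -/
theorem stmt0 (G : SimpleGraph V) [DecidableRel G.Adj] (p : (V → Bool) → ℝ)
    (hp : IsDist p) :
    CSMP G p ↔
      ∀ D : Finset V, ¬ Conn G D →
        ∀ 𝒞 : Finset (Finset V), (∀ C : Finset V, C ∈ 𝒞 ↔ IsMaxConnComp G D C) →
          ∀ i : V → Bool, Pr p D i = ∏ C ∈ 𝒞, Pr p C i := by
  constructor
  · rintro h D - 𝒞 h𝒞 i
    rw [eq_components h𝒞]
    exact pr_eq_prod_components_of_csmp hp.2 h D i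
  · intro h
    refine csmp_of_pr_eq_prod_components fun D i => ?_
    by_cases hD : Conn G D
    · exact pr_eq_prod_components_of_conn hp.2 hD i
    · exact h D hD _ (fun C => mem_components) i

end BMMI
end

section
/- Let V be a finite set, S a group of permutations of V acting on cells i ∈ {0,1}^V by σ(i) = (i_{σ(v)})_{v∈V}, and n : {0,1}^V → ℕ observed counts with total sample size n = Σ_i n(i) > 0. Define p̂_S(i) = (1/|S(i)|) Σ_{j ∈ S(i)} n(j)/n, where S(i) = {σ(i) : σ ∈ S} is the orbit of cell i. Then p̂_S belongs to the symmetry model B(S) and maximizes the likelihood over B(S): for every binary distribution p with p_i = p_{σ(i)} for all σ ∈ S and all i, one has ∏_i p̂_S(i)^{n(i)} ≥ ∏_i p_i^{n(i)} (with 0^0 = 1). -/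
/-!
Orbit averaging preserves the expectation of every `S`-invariant function, so `p̂_S` and the
empirical distribution `n / N` agree on such functions. For `p ∈ B(S)` the likelihood ratio
`p / p̂_S` is invariant, hence `∑ n_i p_i / p̂_i = N ∑ p̂_i p_i / p̂_i ≤ N`, and weighted AM-GM
with weights `n_i / N` gives `∏ (p_i / p̂_i) ^ n_i ≤ 1`.
-/

open Finset

namespace BMMI

variable {V : Type*} [Fintype V] [DecidableEq V]

open Classical in
/-- The orbit `S(i)` of the cell `i` under the group `S` acting by
`σ(i) = (i_{σ(v)})_{v ∈ V}`. -/
noncomputable def orbitF (S : Subgroup (Equiv.Perm V)) (i : V → Bool) :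
    Finset (V → Bool) :=
  Finset.univ.filter (fun j => ∃ σ ∈ S, (fun v => i (σ v)) = j)

/-- The group-averaged empirical distribution `p̂_S`. -/
noncomputable def phat (S : Subgroup (Equiv.Perm V)) (n : (V → Bool) → ℕ)
    (i : V → Bool) : ℝ :=
  ((orbitF S i).card : ℝ)⁻¹ *
    ∑ j ∈ orbitF S i, (n j : ℝ) / (∑ k : V → Bool, (n k : ℝ))

end BMMI

theorem prod_pow_le_prod_pow_of_sum_mul_div_le {ι : Type*} (s : Finset ι) (x y : ι → ℝ)
    (n : ι → ℕ) (hx : ∀ i ∈ s, 0 ≤ x i) (hy : ∀ i ∈ s, 0 ≤ y i)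
    (hy₀ : ∀ i ∈ s, y i = 0 → n i = 0)
    (h : ∑ i ∈ s, n i * (x i / y i) ≤ ∑ i ∈ s, (n i : ℝ)) :
    ∏ i ∈ s, x i ^ n i ≤ ∏ i ∈ s, y i ^ n i := by
  rcases (Nat.cast_nonneg (∑ i ∈ s, n i) : (0 : ℝ) ≤ _).eq_or_lt with hN | hN
  · have hn : ∀ i ∈ s, n i = 0 := Finset.sum_eq_zero_iff.mp (by exact_mod_cast hN.symm)
    rw [Finset.prod_eq_one fun i hi => by rw [hn i hi, pow_zero],
      Finset.prod_eq_one fun i hi => by rw [hn i hi, pow_zero]]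
  push_cast at hN
  set z : ι → ℝ := fun i => x i / y i
  have hz : ∀ i ∈ s, 0 ≤ z i := fun i hi => div_nonneg (hx i hi) (hy i hi)
  have hz_prod : ∏ i ∈ s, z i ^ n i ≤ 1 := by
    have amgm := Real.geom_mean_le_arith_mean s (fun i => (n i : ℝ)) z
      (fun i _ => Nat.cast_nonneg _) hN hz
    simp only [Real.rpow_natCast] at amgm
    by_contra! h1
    have := Real.one_lt_rpow h1 (inv_pos.mpr hN)
    linarith [(div_le_one hN).mpr h]
  have hxzy : ∀ i ∈ s, x i ^ n i = z i ^ n i * y i ^ n i := by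
    intro i hi
    rcases (hy i hi).eq_or_lt with hyi | hyi
    · simp [hy₀ i hi hyi.symm]
    · rw [← mul_pow, div_mul_cancel₀ _ hyi.ne']
  calc ∏ i ∈ s, x i ^ n i = (∏ i ∈ s, z i ^ n i) * ∏ i ∈ s, y i ^ n i := by
        rw [Finset.prod_congr rfl hxzy, Finset.prod_mul_distrib]
    _ ≤ ∏ i ∈ s, y i ^ n i :=
        mul_le_of_le_one_left (Finset.prod_nonneg fun i hi => pow_nonneg (hy i hi) _) hz_prod

namespace BMMI

variable {V : Type*} [Fintype V] [DecidableEq V]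

/-- For a distribution `p`, `IsInvariant S p` is the paper's `p ∈ B(S)`. -/
def IsInvariant {β : Type*} (S : Subgroup (Equiv.Perm V)) (f : (V → Bool) → β) : Prop :=
  ∀ σ ∈ S, ∀ i : V → Bool, f i = f (fun v => i (σ v))

section Orbits

variable {S : Subgroup (Equiv.Perm V)}

theorem mem_orbitF {i j : V → Bool} : j ∈ orbitF S i ↔ ∃ σ ∈ S, (fun v => i (σ v)) = j := by
  simp [orbitF]

theorem self_mem_orbitF (i : V → Bool) : i ∈ orbitF S i :=
  mem_orbitF.mpr ⟨1, S.one_mem, rfl⟩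

theorem orbitF_eq_of_mem {i j : V → Bool} (h : j ∈ orbitF S i) : orbitF S j = orbitF S i := by
  obtain ⟨σ, hσ, rfl⟩ := mem_orbitF.mp h
  ext k
  simp only [mem_orbitF]
  constructor
  · rintro ⟨τ, hτ, rfl⟩
    exact ⟨σ * τ, S.mul_mem hσ hτ, rfl⟩
  · rintro ⟨ρ, hρ, rfl⟩
    exact ⟨σ⁻¹ * ρ, S.mul_mem (S.inv_mem hσ) hρ, by simp [Equiv.Perm.mul_apply]⟩

theorem mem_orbitF_comm {i j : V → Bool} : j ∈ orbitF S i ↔ i ∈ orbitF S j :=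
  ⟨fun h => orbitF_eq_of_mem h ▸ self_mem_orbitF i,
    fun h => orbitF_eq_of_mem h ▸ self_mem_orbitF j⟩

theorem IsInvariant.apply_eq_of_mem {β : Type*} {f : (V → Bool) → β} (hf : IsInvariant S f)
    {i j : V → Bool} (h : j ∈ orbitF S i) : f j = f i := by
  obtain ⟨σ, hσ, rfl⟩ := mem_orbitF.mp h
  exact (hf σ hσ i).symm

theorem sum_sum_orbitF {M : Type*} [AddCommMonoid M] (F : (V → Bool) → M) :
    ∑ i, ∑ j ∈ orbitF S i, F j = ∑ j, (orbitF S j).card • F j := by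
  rw [Finset.sum_comm' (t' := univ) (s' := orbitF S) fun i j => by simp [mem_orbitF_comm]]
  simp_rw [Finset.sum_const]

theorem sum_inv_card_mul_sum_orbitF (F : (V → Bool) → ℝ) :
    ∑ i, ((orbitF S i).card : ℝ)⁻¹ * ∑ j ∈ orbitF S i, F j = ∑ i, F i := by
  calc ∑ i, ((orbitF S i).card : ℝ)⁻¹ * ∑ j ∈ orbitF S i, F j
      = ∑ i, ∑ j ∈ orbitF S i, ((orbitF S j).card : ℝ)⁻¹ * F j := by
        refine Finset.sum_congr rfl fun i _ => ?_
        rw [Finset.mul_sum]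
        exact Finset.sum_congr rfl fun j hj => by rw [orbitF_eq_of_mem hj]
    _ = ∑ i, F i := by
        rw [sum_sum_orbitF]
        refine Finset.sum_congr rfl fun j _ => ?_
        have hcard : ((orbitF S j).card : ℝ) ≠ 0 := by
          exact_mod_cast (Finset.card_pos.mpr ⟨j, self_mem_orbitF j⟩).ne'
        rw [nsmul_eq_mul, mul_inv_cancel_left₀ hcard]

end Orbits

section Phat

variable (S : Subgroup (Equiv.Perm V)) (n : (V → Bool) → ℕ)

theorem phat_nonneg (i : V → Bool) : 0 ≤ phat S n i := by
  unfold phat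
  positivity

theorem phat_pos_of_ne_zero {i : V → Bool} (hi : n i ≠ 0) : 0 < phat S n i := by
  have hN : (0 : ℝ) < ∑ k, (n k : ℝ) :=
    Finset.sum_pos' (fun k _ => Nat.cast_nonneg _) ⟨i, mem_univ i, by positivity⟩
  have hcard : (0 : ℝ) < (orbitF S i).card := by
    exact_mod_cast Finset.card_pos.mpr ⟨i, self_mem_orbitF i⟩
  refine mul_pos (inv_pos.mpr hcard) (Finset.sum_pos' (fun j _ => by positivity) ?_)
  exact ⟨i, self_mem_orbitF i, by positivity⟩

theorem isInvariant_phat : IsInvariant S (phat S n) := fun σ hσ i => by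
  unfold phat
  rw [orbitF_eq_of_mem (mem_orbitF.mpr ⟨σ, hσ, rfl⟩)]

theorem sum_phat_mul_of_isInvariant {g : (V → Bool) → ℝ} (hg : IsInvariant S g) :
    ∑ i, phat S n i * g i = ∑ i, (n i : ℝ) / (∑ k, (n k : ℝ)) * g i := by
  rw [← sum_inv_card_mul_sum_orbitF (S := S) fun i => (n i : ℝ) / (∑ k, (n k : ℝ)) * g i]
  refine Finset.sum_congr rfl fun i _ => ?_
  unfold phat
  rw [mul_assoc, Finset.sum_mul]
  congr 1
  exact Finset.sum_congr rfl fun j hj => by rw [hg.apply_eq_of_mem hj]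

theorem isDist_phat (hn : 0 < ∑ i, n i) : IsDist (phat S n) := by
  refine ⟨phat_nonneg S n, ?_⟩
  have hN : (∑ k, (n k : ℝ)) ≠ 0 := by exact_mod_cast hn.ne'
  simpa [← Finset.sum_div, div_self hN] using
    sum_phat_mul_of_isInvariant S n (g := fun _ => 1) fun _ _ _ => rfl

theorem prod_pow_le_prod_phat_pow (hn : 0 < ∑ i, n i) {p : (V → Bool) → ℝ} (hp : IsDist p)
    (hpS : IsInvariant S p) : ∏ i, p i ^ n i ≤ ∏ i, phat S n i ^ n i := by
  refine prod_pow_le_prod_pow_of_sum_mul_div_le _ _ _ _ (fun i _ => hp.1 i)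
    (fun i _ => phat_nonneg S n i) (fun i _ h => ?_) ?_
  · by_contra hi
    exact (phat_pos_of_ne_zero S n hi).ne' h
  have hN : (0 : ℝ) < ∑ k, (n k : ℝ) := by exact_mod_cast hn
  have hratio : IsInvariant S fun i => p i / phat S n i := fun σ hσ i => by
    simp only [← hpS σ hσ i, ← isInvariant_phat S n σ hσ i]
  calc ∑ i, (n i : ℝ) * (p i / phat S n i)
      = (∑ k, (n k : ℝ)) * ∑ i, phat S n i * (p i / phat S n i) := by
        rw [sum_phat_mul_of_isInvariant S n hratio, Finset.mul_sum]
        exact Finset.sum_congr rfl fun i _ => by field_simp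
    _ ≤ (∑ k, (n k : ℝ)) * ∑ i, p i := by
        gcongr with i
        rcases (phat_nonneg S n i).eq_or_lt with h | h
        · simp [← h, hp.1 i]
        · rw [mul_div_cancel₀ _ h.ne']
    _ = ∑ k, (n k : ℝ) := by rw [hp.2, mul_one]

end Phat

/-- Group averaging of cell counts yields the MLE in the symmetry model `B(S)`. -/
theorem stmt11 (S : Subgroup (Equiv.Perm V)) (n : (V → Bool) → ℕ)
    (hn : 0 < ∑ i : V → Bool, n i) :
    IsDist (phat S n) ∧
    (∀ σ ∈ S, ∀ i : V → Bool, phat S n i = phat S n (fun v => i (σ v))) ∧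
    (∀ p : (V → Bool) → ℝ, IsDist p →
      (∀ σ ∈ S, ∀ i : V → Bool, p i = p (fun v => i (σ v))) →
      ∏ i : V → Bool, p i ^ n i ≤ ∏ i : V → Bool, phat S n i ^ n i) :=
  ⟨isDist_phat S n hn, isInvariant_phat S n,
    fun _ hp hpS => prod_pow_le_prod_phat_pow S n hn hp hpS⟩

end BMMI
end
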